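/- Let q ≥ 1 and τ ≥ 1, and let B : ℕ → ℕ with B i < 2^τ for all i. Define P'(i) = (∑_{j=0}^{i} 2^((i-j)·τ) · B j) mod q, with the convention P'(-1) = 0 (i.e., for i = 0 the previous value is 0), and define D(i) = ⌊B i / q⌋. If 2^(τ-1) ≤ q < 2^τ, then for all i, B i = ((P'(i) - 2^τ · P'(i-1)) mod q) + D(i) · q. -/

import Mathlib

/-! By Horner's rule the fingerprint sums satisfy `S(i) = 2^τ S(i-1) + B i`, so
`P'(i) - 2^τ P'(i-1) ≡ B i (mod q)`: the fingerprints give the residue of `B i` and `D i` its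
quotient by `q`. -/

open Finset

theorem sum_range_succ_pow_sub_mul {R : Type*} [CommSemiring R] (x : R) (b : ℕ → R) (n : ℕ) :
    ∑ j ∈ range (n + 2), x ^ (n + 1 - j) * b j =
      x * ∑ j ∈ range (n + 1), x ^ (n - j) * b j + b (n + 1) := by
  rw [sum_range_succ, mul_sum, Nat.sub_self, pow_zero, one_mul]
  congr 1
  refine sum_congr rfl fun j hj => ?_
  rw [Nat.succ_sub (Nat.lt_succ_iff.mp (mem_range.mp hj)), pow_succ']
  ring

theorem sum_range_pow_sub_mul_emod_sub_modEq (q x : ℤ) (b : ℕ → ℤ) (n : ℕ) :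
    (∑ j ∈ range (n + 2), x ^ (n + 1 - j) * b j) % q
        - x * ((∑ j ∈ range (n + 1), x ^ (n - j) * b j) % q) ≡ b (n + 1) [ZMOD q] := by
  set S := ∑ j ∈ range (n + 1), x ^ (n - j) * b j
  rw [sum_range_succ_pow_sub_mul]
  calc _ ≡ x * S + b (n + 1) - x * S [ZMOD q] :=
        (Int.mod_modEq _ q).sub ((Int.mod_modEq _ q).mul_left x)
    _ = b (n + 1) := by ring

theorem stmt_1_general (q τ : ℕ)
    (B : ℕ → ℕ)
    (P' : ℕ → ℕ)
    (hP' : ∀ i, P' i = (∑ j ∈ Finset.range (i + 1), 2 ^ ((i - j) * τ) * B j) % q)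
    (D : ℕ → ℕ) (hD : ∀ i, D i = B i / q) :
    ∀ i, (B i : ℤ) =
      (((P' i : ℤ) - 2 ^ τ * (if i = 0 then 0 else (P' (i - 1) : ℤ))) % q) + D i * q := by
  have hP'_int : ∀ i, (P' i : ℤ) =
      (∑ j ∈ range (i + 1), ((2 : ℤ) ^ τ) ^ (i - j) * B j) % q := fun i => by
    simp only [hP' i, ← pow_mul']
    push_cast
    rfl
  intro i
  have key : (P' i : ℤ) - 2 ^ τ * (if i = 0 then 0 else (P' (i - 1) : ℤ)) ≡ B i [ZMOD q] := by
    rcases i with _ | n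
    · simpa [hP'_int] using Int.mod_modEq _ _
    · simpa only [hP'_int, if_neg n.succ_ne_zero, Nat.add_sub_cancel]
        using sum_range_pow_sub_mul_emod_sub_modEq q (2 ^ τ) (fun j => B j) n
  rw [key, hD]
  exact_mod_cast (Nat.mod_add_div' (B i) q).symm

theorem stmt_1 (q τ : ℕ) (hτ : 1 ≤ τ) (hq1 : 2 ^ (τ - 1) ≤ q) (hq2 : q < 2 ^ τ)
    (B : ℕ → ℕ) (hB : ∀ i, B i < 2 ^ τ)
    (P' : ℕ → ℕ)
    (hP' : ∀ i, P' i = (∑ j ∈ Finset.range (i + 1), 2 ^ ((i - j) * τ) * B j) % q)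
    (D : ℕ → ℕ) (hD : ∀ i, D i = B i / q) :
    ∀ i, (B i : ℤ) =
      (((P' i : ℤ) - 2 ^ τ * (if i = 0 then 0 else (P' (i - 1) : ℤ))) % q) + D i * q :=
  stmt_1_general q τ B P' hP' D hD
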